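/- arXiv:math/9811190 — 3 statements merged into one kernel-verified Lean document; each statement's English description precedes it below -/
import Mathlib

section
/- Let p be a prime, and let F_k(T) = \sum_{n≥0} a_n(k) T^n and F_{k'}(T) be formal power series over \mathbb{Z}_p that are Euler products F_k(T) = \prod_{x} (1 - α(x)^k T^{deg(x)})^{-1} over a countable index set with α(x) ∈ \mathbb{Z}_p^* and deg(x) ≥ 1, with only finitely many x of each degree. If k ≡ k' (mod (p-1)p^m), then F_k(T) ≡ F_{k'}(T) (mod p^{m+1}) coefficientwise. -/
open PowerSeries

/-! Modulo `p^{m+1}` the Euler factor `(1 - a T^d)⁻¹` depends only on `a mod p^{m+1}`, and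
for a `p`-adic unit `u` the residue of `u^k` depends only on `k` modulo
`#(ℤ/p^{m+1})ˣ = (p-1)p^m` (Euler's theorem). Reducing both finite products mod `p^{m+1}`
therefore gives the same power series. -/

/-- The Euler factor `(1 - a T^d)^{-1}` as a formal power series over `ℤ_p`
(the inverse of `1 - a T^d`, which has constant term `1`). -/
noncomputable def eulerFactor (p : ℕ) [Fact p.Prime] (a : ℤ_[p]) (d : ℕ) :
    PowerSeries ℤ_[p] :=
  PowerSeries.invOfUnit (1 - PowerSeries.C (R := ℤ_[p]) a * PowerSeries.X ^ d) 1

theorem zpow_eq_zpow_of_natCard_dvd_sub {G : Type*} [Group G] (g : G) {k k' : ℤ}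
    (h : (Nat.card G : ℤ) ∣ k - k') : g ^ k = g ^ k' :=
  zpow_eq_zpow_iff_modEq.2 <| (Int.modEq_iff_dvd.2 <|
    (Int.natCast_dvd_natCast.2 (orderOf_dvd_natCard g)).trans h).symm

theorem ZMod.natCard_units_prime_pow_succ (p : ℕ) [Fact p.Prime] (m : ℕ) :
    Nat.card (ZMod (p ^ (m + 1)))ˣ = p ^ m * (p - 1) := by
  rw [Nat.card_eq_fintype_card, ZMod.card_units_eq_totient,
    Nat.totient_prime_pow_succ Fact.out]

theorem PadicInt.toZModPow_units_zpow_eq {p : ℕ} [hp : Fact p.Prime] (m : ℕ) (u : ℤ_[p]ˣ)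
    {k k' : ℤ} (h : ((p : ℤ) - 1) * (p : ℤ) ^ m ∣ k - k') :
    PadicInt.toZModPow (m + 1) ((u ^ k : ℤ_[p]ˣ) : ℤ_[p]) =
      PadicInt.toZModPow (m + 1) ((u ^ k' : ℤ_[p]ˣ) : ℤ_[p]) := by
  have hcard : (Nat.card (ZMod (p ^ (m + 1)))ˣ : ℤ) ∣ k - k' := by
    rw [ZMod.natCard_units_prime_pow_succ, mul_comm]
    push_cast [Nat.cast_sub hp.out.one_le]
    exact h
  have := zpow_eq_zpow_of_natCard_dvd_sub
    (Units.map (PadicInt.toZModPow (m + 1)).toMonoidHom u) hcard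
  rw [← map_zpow, ← map_zpow] at this
  exact congrArg Units.val this

theorem PowerSeries.map_invOfUnit {R S : Type*} [CommRing R] [CommRing S] (f : R →+* S)
    (φ : R⟦X⟧) (u : Rˣ) (h : constantCoeff φ = u) :
    map f (invOfUnit φ u) = invOfUnit (map f φ) (Units.map f u) :=
  left_inv_eq_right_inv
    (by rw [← map_mul, invOfUnit_mul φ u h, map_one])
    (mul_invOfUnit _ _ (by rw [← coeff_zero_eq_constantCoeff_apply, coeff_map,
      coeff_zero_eq_constantCoeff_apply, h, Units.coe_map, MonoidHom.coe_coe]))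

theorem map_eulerFactor {p : ℕ} [Fact p.Prime] {S : Type*} [CommRing S] (f : ℤ_[p] →+* S)
    (a : ℤ_[p]) {d : ℕ} (hd : 1 ≤ d) :
    map f (eulerFactor p a d) = invOfUnit (1 - C (f a) * X ^ d) 1 := by
  rw [eulerFactor, map_invOfUnit f _ 1 (by simp [zero_pow (Nat.one_le_iff_ne_zero.1 hd)])]
  simp

theorem euler_product_congr_general (p : ℕ) [hp : Fact p.Prime] (m : ℕ)
    (ι : Type*) (deg : ι → ℕ) (hdeg : ∀ x, 1 ≤ deg x)
    (α : ι → ℤ_[p]ˣ) (hfin : ∀ n : ℕ, {x : ι | deg x ≤ n}.Finite)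
    (k k' : ℤ) (F F' : PowerSeries ℤ_[p])
    (hF : ∀ n : ℕ, PowerSeries.coeff (R := ℤ_[p]) n F =
      PowerSeries.coeff (R := ℤ_[p]) n
        (∏ x ∈ (hfin n).toFinset, eulerFactor p ((α x ^ k : ℤ_[p]ˣ) : ℤ_[p]) (deg x)))
    (hF' : ∀ n : ℕ, PowerSeries.coeff (R := ℤ_[p]) n F' =
      PowerSeries.coeff (R := ℤ_[p]) n
        (∏ x ∈ (hfin n).toFinset, eulerFactor p ((α x ^ k' : ℤ_[p]ˣ) : ℤ_[p]) (deg x)))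
    (hcong : ((p : ℤ) - 1) * (p : ℤ) ^ m ∣ k - k') :
    ∀ n : ℕ, PowerSeries.coeff (R := ℤ_[p]) n F - PowerSeries.coeff (R := ℤ_[p]) n F' ∈
      Ideal.span {((p : ℤ_[p]) ^ (m + 1))} := by
  intro n
  rw [← PadicInt.ker_toZModPow, RingHom.mem_ker, map_sub, sub_eq_zero, hF, hF',
    ← coeff_map, ← coeff_map]
  congr 1
  rw [map_prod, map_prod]
  refine Finset.prod_congr rfl fun x _ => ?_
  rw [map_eulerFactor _ _ (hdeg x), map_eulerFactor _ _ (hdeg x),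
    PadicInt.toZModPow_units_zpow_eq m (α x) hcong]

/-- If `F_k(T) = ∏_x (1 - α(x)^k T^{deg x})^{-1}` and
`F_{k'}(T) = ∏_x (1 - α(x)^{k'} T^{deg x})^{-1}` are Euler products over a countable
index set with `α(x) ∈ ℤ_p^*`, `deg x ≥ 1`, and only finitely many `x` of each degree
(so each coefficient is a finite product computation), then `k ≡ k' (mod (p-1)p^m)`
implies `F_k ≡ F_{k'} (mod p^{m+1})` coefficientwise. -/
theorem euler_product_congr (p : ℕ) [hp : Fact p.Prime] (m : ℕ)
    (ι : Type*) [Countable ι] (deg : ι → ℕ) (hdeg : ∀ x, 1 ≤ deg x)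
    (α : ι → ℤ_[p]ˣ) (hfin : ∀ n : ℕ, {x : ι | deg x ≤ n}.Finite)
    (k k' : ℤ) (F F' : PowerSeries ℤ_[p])
    (hF : ∀ n : ℕ, PowerSeries.coeff (R := ℤ_[p]) n F =
      PowerSeries.coeff (R := ℤ_[p]) n
        (∏ x ∈ (hfin n).toFinset, eulerFactor p ((α x ^ k : ℤ_[p]ˣ) : ℤ_[p]) (deg x)))
    (hF' : ∀ n : ℕ, PowerSeries.coeff (R := ℤ_[p]) n F' =
      PowerSeries.coeff (R := ℤ_[p]) n
        (∏ x ∈ (hfin n).toFinset, eulerFactor p ((α x ^ k' : ℤ_[p]ˣ) : ℤ_[p]) (deg x)))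
    (hcong : ((p : ℤ) - 1) * (p : ℤ) ^ m ∣ k - k') :
    ∀ n : ℕ, PowerSeries.coeff (R := ℤ_[p]) n F - PowerSeries.coeff (R := ℤ_[p]) n F' ∈
      Ideal.span {((p : ℤ_[p]) ^ (m + 1))} :=
  euler_product_congr_general p (hp := hp) m ι deg hdeg α hfin k k' F F' hF hF' hcong
end

section
/- Let D(T) = \prod_{i≥0}(1 - z_i T) with z_i in the ring of integers of a complete algebraically closed p-adic field, such that ord_p z_i → ∞ (so D is p-adically entire). For each rational s ≥ 0, let d_s = #\{i : ord_p z_i = s\}, assumed finite. Suppose the Newton polygon of D satisfies the quadratic lower bound: the valuation of the n-th coefficient of D is at least n^2/(2c) - e·n for constants c > 0, e ≥ 0. Then for every real A ≥ 1, (1/A) \sum_{0 ≤ s ≤ A} d_s ≤ c + c·e/A. In particular the average number of reciprocal zeros with slope in [0, A] is uniformly bounded. -/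
/-! Every slope counted by `N = #{i : v i ≤ A}` is at most `A`, so the Newton polygon bound
gives `N² / c - e N ≤ A N`, i.e. `N ≤ c (A + e)`. -/

lemma le_mul_add_of_div_mul_sq_sub_le {N A c e : ℝ} (hN : 0 ≤ N) (hc : 0 < c)
    (hAe : 0 ≤ A + e) (h : 1 / c * N ^ 2 - e * N ≤ A * N) : N ≤ c * (A + e) := by
  rcases hN.eq_or_lt with rfl | hN
  · positivity
  have hdiv : N / c - e ≤ A := by
    refine le_of_mul_le_mul_right ?_ hN
    calc (N / c - e) * N = 1 / c * N ^ 2 - e * N := by ring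
      _ ≤ A * N := h
  rw [div_sub' hc.ne', div_le_iff₀ hc] at hdiv
  linarith

theorem average_slope_count_bound_general (v : ℕ → ℚ)
    (hfin : ∀ A : ℝ, {i : ℕ | (v i : ℝ) ≤ A}.Finite)
    (c e : ℝ) (hc : 0 < c) (he : 0 ≤ e)
    (hNP : ∀ A : ℝ, 1 ≤ A →
      (1 / c) * ((hfin A).toFinset.card : ℝ) ^ 2 - e * ((hfin A).toFinset.card : ℝ) ≤
        ∑ i ∈ (hfin A).toFinset, (v i : ℝ)) :
    ∀ A : ℝ, 1 ≤ A →
      (1 / A) * ((hfin A).toFinset.card : ℝ) ≤ c + c * e / A := by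
  intro A hA
  have hA0 : 0 < A := one_pos.trans_le hA
  have hsum : ∑ i ∈ (hfin A).toFinset, (v i : ℝ) ≤ A * (hfin A).toFinset.card := by
    simpa [mul_comm] using Finset.sum_le_card_nsmul (hfin A).toFinset (fun i ↦ (v i : ℝ)) A
      fun i hi ↦ (hfin A).mem_toFinset.mp hi
  have hcard := le_mul_add_of_div_mul_sq_sub_le (Nat.cast_nonneg _) hc (by linarith)
    ((hNP A hA).trans hsum)
  calc (1 / A) * ((hfin A).toFinset.card : ℝ) ≤ 1 / A * (c * (A + e)) := by gcongr
    _ = c + c * e / A := by field_simp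

/-- Let `D(T) = ∏ᵢ (1 - zᵢT)` be a `p`-adically entire function with integral
reciprocal zeros, encoded by the sequence `v i = ord_p zᵢ ≥ 0` of slopes, with only
finitely many slopes in any bounded range. Suppose the Newton polygon of `D`
satisfies the quadratic lower bound, i.e. (in the equivalent slope form, as in
Proposition 2.11) for all `A ≥ 1`,
`∑_{v i ≤ A} v i ≥ (1/c)(#{i : v i ≤ A})² - e·#{i : v i ≤ A}`
with `c > 0`, `e ≥ 0`. Then for all real `A ≥ 1`,
`(1/A) ∑_{0 ≤ s ≤ A} d_s ≤ c + c·e/A`, where `∑_{0 ≤ s ≤ A} d_s = #{i : v i ≤ A}`;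
in particular the average number of reciprocal zeros of slope in `[0, A]` is
uniformly bounded. -/
theorem average_slope_count_bound (v : ℕ → ℚ) (hv : ∀ i, 0 ≤ v i)
    (hfin : ∀ A : ℝ, {i : ℕ | (v i : ℝ) ≤ A}.Finite)
    (c e : ℝ) (hc : 0 < c) (he : 0 ≤ e)
    (hNP : ∀ A : ℝ, 1 ≤ A →
      (1 / c) * ((hfin A).toFinset.card : ℝ) ^ 2 - e * ((hfin A).toFinset.card : ℝ) ≤
        ∑ i ∈ (hfin A).toFinset, (v i : ℝ)) :
    ∀ A : ℝ, 1 ≤ A →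
      (1 / A) * ((hfin A).toFinset.card : ℝ) ≤ c + c * e / A :=
  average_slope_count_bound_general v hfin c e hc he hNP
end

section
/- With the hypotheses of the previous statement (entire p-adic function whose slope-s multiplicities d_s satisfy \sum_{0≤s≤A} s·d_s ≥ (1/c)(\sum_{0≤s≤A} d_s)^2 - e·\sum_{0≤s≤A} d_s for all A ≥ 1), there is a constant c' (e.g. c' = c(1+e)) such that d_s ≤ c'·s for all rational s ≥ 1, i.e. the individual slope multiplicities grow at most linearly in the slope. -/
/-- With the hypotheses of the average bound (entire `p`-adic function whose slope
multiplicities satisfy the quadratic Newton polygon lower bound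
`∑_{v i ≤ A} v i ≥ (1/c)(#{i : v i ≤ A})² - e·#{i : v i ≤ A}` for all `A ≥ 1`),
there is a constant `c'` (e.g. `c' = c(1+e)`) such that the individual slope
multiplicities satisfy `d_s ≤ c'·s` for all rational slopes `s ≥ 1`. -/
theorem slope_multiplicity_linear_bound (v : ℕ → ℚ) (hv : ∀ i, 0 ≤ v i)
    (hfin : ∀ A : ℝ, {i : ℕ | (v i : ℝ) ≤ A}.Finite)
    (hfin' : ∀ s : ℚ, {i : ℕ | v i = s}.Finite)
    (c e : ℝ) (hc : 0 < c) (he : 0 ≤ e)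
    (hNP : ∀ A : ℝ, 1 ≤ A →
      (1 / c) * ((hfin A).toFinset.card : ℝ) ^ 2 - e * ((hfin A).toFinset.card : ℝ) ≤
        ∑ i ∈ (hfin A).toFinset, (v i : ℝ)) :
    ∃ c' : ℝ, 0 < c' ∧ ∀ s : ℚ, 1 ≤ s →
      (((hfin' s).toFinset.card : ℝ)) ≤ c' * (s : ℝ) := by
  refine ⟨c * (1 + e), by positivity, fun s hs => ?_⟩
  have hs1 : (1 : ℝ) ≤ (s : ℝ) := by exact_mod_cast hs
  set D : ℝ := ((hfin (s : ℝ)).toFinset.card : ℝ) with hD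
  have hDnn : 0 ≤ D := Nat.cast_nonneg _
  -- d_s ≤ D
  have hsub : (hfin' s).toFinset ⊆ (hfin (s : ℝ)).toFinset := by
    intro i hi
    simp only [Set.Finite.mem_toFinset, Set.mem_setOf_eq] at hi ⊢
    exact_mod_cast le_of_eq hi
  have hcard : (((hfin' s).toFinset.card : ℝ)) ≤ D :=
    Nat.cast_le.2 (Finset.card_le_card hsub)
  -- sum bound
  have hsum : ∑ i ∈ (hfin (s : ℝ)).toFinset, (v i : ℝ) ≤ D * (s : ℝ) := by
    rw [hD]
    calc ∑ i ∈ (hfin (s : ℝ)).toFinset, (v i : ℝ)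
        ≤ ∑ _i ∈ (hfin (s : ℝ)).toFinset, (s : ℝ) := by
          refine Finset.sum_le_sum fun i hi => ?_
          simpa [Set.Finite.mem_toFinset] using hi
      _ = _ := by rw [Finset.sum_const, nsmul_eq_mul]
  have hNP' := hNP (s : ℝ) hs1
  have key : (1 / c) * D ^ 2 - e * D ≤ D * (s : ℝ) := le_trans hNP' hsum
  -- conclude D ≤ c(1+e)s
  have hDle : D ≤ c * (1 + e) * (s : ℝ) := by
    rcases eq_or_lt_of_le hDnn with h0 | h0
    · rw [← h0]; positivity
    · have h1 : (1 / c) * D ≤ e + (s : ℝ) := by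
        have := key
        nlinarith [sq_nonneg D]
      have h2 : D ≤ c * (e + (s : ℝ)) := by
        rw [div_mul_eq_mul_div, one_mul, div_le_iff₀ hc] at h1
        linarith [h1]
      calc D ≤ c * (e + (s : ℝ)) := h2
        _ ≤ c * ((1 + e) * (s : ℝ)) := by
            have : e + (s : ℝ) ≤ (1 + e) * (s : ℝ) := by nlinarith
            exact mul_le_mul_of_nonneg_left this hc.le
        _ = c * (1 + e) * (s : ℝ) := by ring
  exact hcard.trans hDle
end
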